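/- Let Φ(z) = a₁z + b₁ with |a₁| ≤ 1 and Ψ(z) = a₂z + b₂ with |a₂| ≤ 1, and suppose C_Φ and C_Ψ are bounded on H_E(ξ). Then the product C_Ψ C_Φ is an isometry on H_E(ξ) if and only if |a₁| = 1, |a₂| = 1, and a₁b₂ + b₁ = 0; the same equivalence holds for unitarity. -/

import Mathlib

noncomputable section

open Filter

/-- `n`-th Taylor coefficient of `f` at `0`. -/
def heCoeff (f : ℂ → ℂ) (n : ℕ) : ℂ := iteratedDeriv n f 0 / (n.factorial : ℂ)

/-- Membership in the weighted Hardy space of entire functions `H_E(ξ)`. -/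
def MemHE (ξ : ℕ → ℝ) (f : ℂ → ℂ) : Prop :=
  Differentiable ℂ f ∧ Summable (fun n => ‖heCoeff f n‖ ^ 2 * (ξ n) ^ 2)

/-- Squared norm in `H_E(ξ)`. -/
def heNormSq (ξ : ℕ → ℝ) (f : ℂ → ℂ) : ℝ := ∑' n, ‖heCoeff f n‖ ^ 2 * (ξ n) ^ 2

/-- Inner product in `H_E(ξ)`. -/
def heInner (ξ : ℕ → ℝ) (f g : ℂ → ℂ) : ℂ :=
  ∑' n, heCoeff f n * (starRingEnd ℂ) (heCoeff g n) * ((ξ n : ℂ)) ^ 2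

/-- `ξ` is an admissible weight sequence: positive with `ξ n ^ (1/n) → ∞`. -/
def HEWeight (ξ : ℕ → ℝ) : Prop :=
  (∀ n, 0 < ξ n) ∧ Tendsto (fun n : ℕ => (ξ n) ^ ((1 : ℝ) / n)) atTop atTop

/-- An operator on functions is an isometry of `H_E(ξ)`. -/
def IsIsometryHE (ξ : ℕ → ℝ) (T : (ℂ → ℂ) → (ℂ → ℂ)) : Prop :=
  (∀ f, MemHE ξ f → MemHE ξ (T f)) ∧ ∀ f, MemHE ξ f → heNormSq ξ (T f) = heNormSq ξ f

/-- Unitary: an isometry of `H_E(ξ)` mapping `H_E(ξ)` onto itself. -/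
def IsUnitaryHE (ξ : ℕ → ℝ) (T : (ℂ → ℂ) → (ℂ → ℂ)) : Prop :=
  IsIsometryHE ξ T ∧ ∀ g, MemHE ξ g → ∃ f, MemHE ξ f ∧ T f = g

/-- Composition operator `C_Φ f = f ∘ Φ`. -/
def compOp (Φ : ℂ → ℂ) : (ℂ → ℂ) → (ℂ → ℂ) := fun f => f ∘ Φ

/-- Weighted composition operator `C_{Υ,Φ} f = Υ · (f ∘ Φ)`. -/
def wCompOp (Υ Φ : ℂ → ℂ) : (ℂ → ℂ) → (ℂ → ℂ) := fun f z => Υ z * f (Φ z)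

/-- Reproducing kernel `K_p(z) = ∑ conj(p)^n z^n / ξ_n²`. -/
def heKernel (ξ : ℕ → ℝ) (p : ℂ) : ℂ → ℂ :=
  fun z => ∑' n, (starRingEnd ℂ p) ^ n * z ^ n / ((ξ n : ℂ)) ^ 2

/-- Boundedness of an operator on `H_E(ξ)`. -/
def IsBoundedHE (ξ : ℕ → ℝ) (T : (ℂ → ℂ) → (ℂ → ℂ)) : Prop :=
  ∃ M > (0 : ℝ), ∀ f, MemHE ξ f → MemHE ξ (T f) ∧
    Real.sqrt (heNormSq ξ (T f)) ≤ M * Real.sqrt (heNormSq ξ f)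

/-- Generalized weighted composition operator `D^p_{Φ,Υ} f = Υ · (f^{(p)} ∘ Φ)`. -/
def genWComp (p : ℕ) (Φ Υ : ℂ → ℂ) : (ℂ → ℂ) → (ℂ → ℂ) :=
  fun f z => Υ z * iteratedDeriv p f (Φ z)

/-!
The composite `C_Ψ C_Φ` is `f ↦ f (c z + d)` with `c = a₁ a₂` and `d = a₁ b₂ + b₁`. When `d = 0`
and `‖c‖ = 1`, the `n`-th Taylor coefficient of `f (c z)` is `cⁿ` times that of `f`, so the weighted
norm is preserved, and `z ↦ c⁻¹ z` provides the inverse. Conversely, `z` and `z + d` have only two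
nonzero coefficients each; comparing their norms with those of their images forces `d = 0` and
`‖c‖ = 1`, and then `‖a₁‖, ‖a₂‖ ≤ 1` give `‖a₁‖ = ‖a₂‖ = 1`.
-/

lemma heCoeff_affine (α β : ℂ) (n : ℕ) :
    heCoeff (fun z => α * z + β) n = if n = 0 then β else if n = 1 then α else 0 := by
  rw [heCoeff, iteratedDeriv_fun_add (by fun_prop) (by fun_prop),
    iteratedDeriv_const_mul _ (by fun_prop), iteratedDeriv_fun_id_zero, iteratedDeriv_const]
  rcases n with _ | _ | n <;> simp

lemma heNormSq_affine (ξ : ℕ → ℝ) (α β : ℂ) :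
    heNormSq ξ (fun z => α * z + β) = ‖β‖ ^ 2 * ξ 0 ^ 2 + ‖α‖ ^ 2 * ξ 1 ^ 2 := by
  rw [heNormSq, tsum_eq_sum (s := {0, 1}), Finset.sum_pair zero_ne_one]
  · simp [heCoeff_affine]
  · intro n hn
    simp only [Finset.mem_insert, Finset.mem_singleton, not_or] at hn
    simp [heCoeff_affine, hn.1, hn.2]

lemma memHE_affine (ξ : ℕ → ℝ) (α β : ℂ) : MemHE ξ (fun z => α * z + β) := by
  refine ⟨by fun_prop, summable_of_ne_finset_zero (s := {0, 1}) fun n hn => ?_⟩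
  simp only [Finset.mem_insert, Finset.mem_singleton, not_or] at hn
  simp [heCoeff_affine, hn.1, hn.2]

lemma heCoeff_comp_const_mul {f : ℂ → ℂ} (hf : Differentiable ℂ f) (c : ℂ) (n : ℕ) :
    heCoeff (fun z => f (c * z)) n = c ^ n * heCoeff f n := by
  simp only [heCoeff, iteratedDeriv_comp_const_mul hf.contDiff c, mul_zero, mul_div_assoc]

lemma compOp_compOp_affine (a₁ b₁ a₂ b₂ : ℂ) (f : ℂ → ℂ) :
    compOp (fun z => a₂ * z + b₂) (compOp (fun z => a₁ * z + b₁) f) =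
      fun z => f (a₁ * a₂ * z + (a₁ * b₂ + b₁)) := by
  funext z
  simp only [compOp, Function.comp_apply]
  ring_nf

section Rotation

variable {ξ : ℕ → ℝ} {c : ℂ}

lemma heCoeff_sq_comp_const_mul (hc : ‖c‖ = 1) {f : ℂ → ℂ} (hf : Differentiable ℂ f) :
    (fun n => ‖heCoeff (fun z => f (c * z)) n‖ ^ 2 * ξ n ^ 2) =
      fun n => ‖heCoeff f n‖ ^ 2 * ξ n ^ 2 := by
  simp only [heCoeff_comp_const_mul hf, norm_mul, norm_pow, hc, one_pow, one_mul]

lemma MemHE.comp_const_mul (hc : ‖c‖ = 1) {f : ℂ → ℂ} (hf : MemHE ξ f) :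
    MemHE ξ (fun z => f (c * z)) :=
  ⟨hf.1.comp (differentiable_id.const_mul c), heCoeff_sq_comp_const_mul hc hf.1 ▸ hf.2⟩

lemma heNormSq_comp_const_mul (hc : ‖c‖ = 1) {f : ℂ → ℂ} (hf : Differentiable ℂ f) :
    heNormSq ξ (fun z => f (c * z)) = heNormSq ξ f := by
  rw [heNormSq, heNormSq, heCoeff_sq_comp_const_mul hc hf]

lemma isUnitaryHE_comp_const_mul (hc : ‖c‖ = 1) : IsUnitaryHE ξ fun f z => f (c * z) := by
  have hc₀ : c ≠ 0 := norm_ne_zero_iff.mp (hc ▸ one_ne_zero)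
  have hc' : ‖c⁻¹‖ = 1 := by rw [norm_inv, hc, inv_one]
  refine ⟨⟨fun f hf => hf.comp_const_mul hc, fun f hf => heNormSq_comp_const_mul hc hf.1⟩,
    fun g hg => ⟨fun z => g (c⁻¹ * z), hg.comp_const_mul hc', ?_⟩⟩
  funext z
  simp only [inv_mul_cancel_left₀ hc₀]

end Rotation

lemma eq_zero_and_norm_eq_one_of_isIsometryHE_comp_affine {ξ : ℕ → ℝ} (hξ₀ : ξ 0 ≠ 0)
    (hξ₁ : ξ 1 ≠ 0) {c d : ℂ} (h : IsIsometryHE ξ fun f z => f (c * z + d)) :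
    d = 0 ∧ ‖c‖ = 1 := by
  have hnorm (β : ℂ) : ‖d + β‖ ^ 2 * ξ 0 ^ 2 + ‖c‖ ^ 2 * ξ 1 ^ 2 = ‖β‖ ^ 2 * ξ 0 ^ 2 + ξ 1 ^ 2 := by
    have := h.2 _ (memHE_affine ξ 1 β)
    simp only [one_mul] at this
    rw [show (fun z => c * z + d + β) = fun z => c * z + (d + β) by funext z; ring,
      heNormSq_affine, show (fun z : ℂ => z + β) = fun z => 1 * z + β by simp,
      heNormSq_affine, norm_one, one_pow, one_mul] at this
    exact this
  have hz := hnorm 0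
  have hzd := hnorm d
  simp only [add_zero, norm_zero, ← two_mul, norm_mul, Complex.norm_two] at hz hzd
  have hd : ‖d‖ ^ 2 * ξ 0 ^ 2 = 0 := by linarith
  have hd₀ : d = 0 := by simpa [hξ₀] using hd
  refine ⟨hd₀, ?_⟩
  rw [hd₀, norm_zero] at hz
  have hc : (‖c‖ ^ 2 - 1) * ξ 1 ^ 2 = 0 := by linarith
  rw [mul_eq_zero, sub_eq_zero, pow_eq_one_iff_of_nonneg (norm_nonneg c) two_ne_zero] at hc
  simpa [hξ₁] using hc

theorem stmt7_general (ξ : ℕ → ℝ) (hξ : HEWeight ξ) (a₁ b₁ a₂ b₂ : ℂ)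
    (ha₁ : ‖a₁‖ ≤ 1) (ha₂ : ‖a₂‖ ≤ 1)
    (Φ Ψ : ℂ → ℂ) (hΦ : Φ = fun z => a₁ * z + b₁) (hΨ : Ψ = fun z => a₂ * z + b₂) :
    (IsIsometryHE ξ (fun f => compOp Ψ (compOp Φ f)) ↔
      (‖a₁‖ = 1 ∧ ‖a₂‖ = 1 ∧ a₁ * b₂ + b₁ = 0)) ∧
    (IsUnitaryHE ξ (fun f => compOp Ψ (compOp Φ f)) ↔
      (‖a₁‖ = 1 ∧ ‖a₂‖ = 1 ∧ a₁ * b₂ + b₁ = 0)) := by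
  have hT : (fun f => compOp Ψ (compOp Φ f)) =
      fun f z => f (a₁ * a₂ * z + (a₁ * b₂ + b₁)) := by
    subst hΦ hΨ
    exact funext (compOp_compOp_affine a₁ b₁ a₂ b₂)
  rw [hT]
  have hiso (h : IsIsometryHE ξ fun f z => f (a₁ * a₂ * z + (a₁ * b₂ + b₁))) :
      ‖a₁‖ = 1 ∧ ‖a₂‖ = 1 ∧ a₁ * b₂ + b₁ = 0 := by
    obtain ⟨hd, hc⟩ :=
      eq_zero_and_norm_eq_one_of_isIsometryHE_comp_affine (hξ.1 0).ne' (hξ.1 1).ne' h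
    rw [norm_mul] at hc
    exact ⟨le_antisymm ha₁ (by nlinarith [norm_nonneg a₁]),
      le_antisymm ha₂ (by nlinarith [norm_nonneg a₂]), hd⟩
  have hunit (h : ‖a₁‖ = 1 ∧ ‖a₂‖ = 1 ∧ a₁ * b₂ + b₁ = 0) :
      IsUnitaryHE ξ fun f z => f (a₁ * a₂ * z + (a₁ * b₂ + b₁)) := by
    obtain ⟨h₁, h₂, hd⟩ := h
    simpa only [hd, add_zero] using
      isUnitaryHE_comp_const_mul (ξ := ξ) (c := a₁ * a₂) (by rw [norm_mul, h₁, h₂, one_mul])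
  exact ⟨⟨hiso, fun h => (hunit h).1⟩, ⟨fun h => hiso h.1, hunit⟩⟩

/-- For bounded `C_Φ`, `C_Ψ` with `Φ(z) = a₁z + b₁`, `Ψ(z) = a₂z + b₂`,
`|a₁| ≤ 1`, `|a₂| ≤ 1`: the product `C_Ψ C_Φ` is an isometry (resp. unitary)
on `H_E(ξ)` iff `|a₁| = 1`, `|a₂| = 1` and `a₁b₂ + b₁ = 0`. -/
theorem stmt7 (ξ : ℕ → ℝ) (hξ : HEWeight ξ) (a₁ b₁ a₂ b₂ : ℂ)
    (ha₁ : ‖a₁‖ ≤ 1) (ha₂ : ‖a₂‖ ≤ 1)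
    (Φ Ψ : ℂ → ℂ) (hΦ : Φ = fun z => a₁ * z + b₁) (hΨ : Ψ = fun z => a₂ * z + b₂)
    (hbdΦ : IsBoundedHE ξ (compOp Φ)) (hbdΨ : IsBoundedHE ξ (compOp Ψ)) :
    (IsIsometryHE ξ (fun f => compOp Ψ (compOp Φ f)) ↔
      (‖a₁‖ = 1 ∧ ‖a₂‖ = 1 ∧ a₁ * b₂ + b₁ = 0)) ∧
    (IsUnitaryHE ξ (fun f => compOp Ψ (compOp Φ f)) ↔
      (‖a₁‖ = 1 ∧ ‖a₂‖ = 1 ∧ a₁ * b₂ + b₁ = 0)) :=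
  stmt7_general ξ hξ a₁ b₁ a₂ b₂ ha₁ ha₂ Φ Ψ hΦ hΨ
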